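/- Let (U₁, U₂) have a nondegenerate bivariate normal distribution with means μ₁, μ₂, standard deviations σ₁, σ₂ > 0, correlation ρ ∈ (−1, 1), and covariance σ₁₂ = ρσ₁σ₂. Then for all integers k ≥ 1 and m ≥ 1: m·(σ₁²σ₂² − σ₁₂²)·E[U₁^k U₂^{m-1}·1{U₁>0, U₂>0}] = E[(σ₁²·U₁^k U₂^{m+1} − σ₁₂·U₁^{k+1}U₂^m − (σ₁²μ₂ − σ₁₂μ₁)·U₁^k U₂^m)·1{U₁>0, U₂>0}]. -/

import Mathlib

/-!
For fixed `u₁` the density factors, as a function of `u₂`, into a constant times a Gaussian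
kernel with mean `b = μ₂ + (σ₁₂ / σ₁²)(u₁ - μ₁)` and variance `v = (σ₁²σ₂² - σ₁₂²) / σ₁²`.
Integrating `d/du₂ (u₂^m · kernel)` over `(0, ∞)` gives `m v ∫ u₂^(m-1) · kernel =
∫ (u₂ - b) u₂^m · kernel`, the boundary terms vanishing because `m ≥ 1` and the kernel decays.
Multiplying by `σ₁² u₁^k` turns `σ₁² (u₂ - b)` into the polynomial on the right, and Fubini
integrates over `u₁`; all polynomial moments are integrable since the density is dominated by
a product of one-dimensional Gaussians.
-/

open MeasureTheory

/-- Density of the nondegenerate bivariate normal distribution with means `μ₁, μ₂`,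
standard deviations `σ₁, σ₂ > 0` and correlation `ρ ∈ (−1, 1)`. -/
noncomputable def binormalPDF (μ₁ μ₂ σ₁ σ₂ ρ u₁ u₂ : ℝ) : ℝ :=
  (1 / (2 * Real.pi * σ₁ * σ₂ * Real.sqrt (1 - ρ ^ 2))) *
    Real.exp (-(1 / (2 * (1 - ρ ^ 2))) *
      ((u₁ - μ₁) ^ 2 / σ₁ ^ 2 - 2 * ρ * (u₁ - μ₁) * (u₂ - μ₂) / (σ₁ * σ₂)
        + (u₂ - μ₂) ^ 2 / σ₂ ^ 2))

open Real Set Filter Topology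

theorem integrable_pow_mul_exp_neg_mul_sub_sq {a : ℝ} (ha : 0 < a) (c : ℝ) (n : ℕ) :
    Integrable fun u : ℝ => u ^ n * exp (-a * (u - c) ^ 2) := by
  have hmoment (i : ℕ) : Integrable fun v : ℝ => v ^ i * exp (-a * v ^ 2) := by
    simpa [rpow_natCast] using
      integrable_rpow_mul_exp_neg_mul_sq ha (by linarith [i.cast_nonneg (α := ℝ)] : (-1 : ℝ) < i)
  have hshifted : Integrable fun v : ℝ => (v + c) ^ n * exp (-a * v ^ 2) := by
    simp_rw [add_pow, Finset.sum_mul]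
    exact integrable_finsetSum _ fun i _ =>
      ((hmoment i).mul_const (c ^ (n - i) * n.choose i)).congr
        (.of_forall fun v => by ring)
  simpa using hshifted.comp_sub_right c

theorem succ_mul_integral_Ioi_pow_mul_exp_neg_mul_sub_sq {a : ℝ} (ha : 0 < a) (c : ℝ) (n : ℕ) :
    (n + 1) * ∫ u in Ioi 0, u ^ n * exp (-a * (u - c) ^ 2)
      = 2 * a * ∫ u in Ioi 0, (u - c) * u ^ (n + 1) * exp (-a * (u - c) ^ 2) := by
  set g : ℝ → ℝ := fun u => exp (-a * (u - c) ^ 2)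
  have hint (i : ℕ) : Integrable fun u => u ^ i * g u :=
    integrable_pow_mul_exp_neg_mul_sub_sq ha c i
  have hP : Integrable fun u => (n + 1) * (u ^ n * g u) := (hint n).const_mul _
  have hQ : Integrable fun u => 2 * a * ((u - c) * u ^ (n + 1) * g u) :=
    (((hint (n + 2)).sub ((hint (n + 1)).const_mul c)).const_mul (2 * a)).congr
      (.of_forall fun u => by simp only [Pi.sub_apply]; ring)
  have hderiv (u : ℝ) : HasDerivAt (fun u => u ^ (n + 1) * g u)
      ((n + 1) * (u ^ n * g u) - 2 * a * ((u - c) * u ^ (n + 1) * g u)) u := by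
    have hg : HasDerivAt g (g u * (-a * (2 * (u - c)))) u := by
      simpa [g] using ((((hasDerivAt_id u).sub_const c).pow 2).const_mul (-a)).exp
    refine ((hasDerivAt_pow (n + 1) u).fun_mul hg).congr_deriv ?_
    push_cast
    ring
  have hvanish : Tendsto (fun u => u ^ (n + 1) * g u) atTop (𝓝 0) :=
    tendsto_zero_of_hasDerivAt_of_integrableOn_Ioi (a := 0) (fun u _ => hderiv u)
      (hP.sub hQ).integrableOn (hint (n + 1)).integrableOn
  have hFTC := integral_Ioi_of_hasDerivAt_of_tendsto' (a := 0) (fun u _ => hderiv u)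
    (hP.sub hQ).integrableOn hvanish
  rw [integral_sub hP.integrableOn hQ.integrableOn, integral_const_mul, integral_const_mul] at hFTC
  rw [zero_pow n.succ_ne_zero, zero_mul, sub_self] at hFTC
  exact sub_eq_zero.1 hFTC

theorem one_sub_sq_mul_add_sq_le (ρ X Y : ℝ) :
    (1 - ρ ^ 2) * (X ^ 2 + Y ^ 2) ≤ 2 * (X ^ 2 - 2 * ρ * X * Y + Y ^ 2) := by
  nlinarith [sq_nonneg (X - ρ * Y), sq_nonneg (Y - ρ * X)]

section Binormal

variable {μ₁ μ₂ σ₁ σ₂ ρ : ℝ}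

theorem binormalPDF_nonneg (hσ₁ : 0 < σ₁) (hσ₂ : 0 < σ₂) (u₁ u₂ : ℝ) :
    0 ≤ binormalPDF μ₁ μ₂ σ₁ σ₂ ρ u₁ u₂ := by
  unfold binormalPDF
  positivity

theorem binormalPDF_le_mul_exp_mul_exp (hσ₁ : 0 < σ₁) (hσ₂ : 0 < σ₂) (hρ : ρ ^ 2 < 1) (u₁ u₂ : ℝ) :
    binormalPDF μ₁ μ₂ σ₁ σ₂ ρ u₁ u₂ ≤
      1 / (2 * π * σ₁ * σ₂ * √(1 - ρ ^ 2)) *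
        (exp (-(4 * σ₁ ^ 2)⁻¹ * (u₁ - μ₁) ^ 2) * exp (-(4 * σ₂ ^ 2)⁻¹ * (u₂ - μ₂) ^ 2)) := by
  unfold binormalPDF
  rw [← exp_add]
  gcongr
  have hquad := one_sub_sq_mul_add_sq_le ρ ((u₁ - μ₁) / σ₁) ((u₂ - μ₂) / σ₂)
  have hform : (u₁ - μ₁) ^ 2 / σ₁ ^ 2 - 2 * ρ * (u₁ - μ₁) * (u₂ - μ₂) / (σ₁ * σ₂)
      + (u₂ - μ₂) ^ 2 / σ₂ ^ 2
      = ((u₁ - μ₁) / σ₁) ^ 2 - 2 * ρ * ((u₁ - μ₁) / σ₁) * ((u₂ - μ₂) / σ₂) + ((u₂ - μ₂) / σ₂) ^ 2 := by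
    ring
  have hsum : -(4 * σ₁ ^ 2)⁻¹ * (u₁ - μ₁) ^ 2 + -(4 * σ₂ ^ 2)⁻¹ * (u₂ - μ₂) ^ 2
      = -((((u₁ - μ₁) / σ₁) ^ 2 + ((u₂ - μ₂) / σ₂) ^ 2) / 4) := by
    field_simp
    ring
  rw [hform, hsum, neg_mul, neg_le_neg_iff, one_div, inv_mul_eq_div,
    div_le_div_iff₀ (by norm_num) (by linarith)]
  linarith

theorem integrable_pow_mul_pow_mul_binormalPDF (hσ₁ : 0 < σ₁) (hσ₂ : 0 < σ₂) (hρ : ρ ^ 2 < 1)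
    (i j : ℕ) :
    Integrable fun p : ℝ × ℝ => p.1 ^ i * p.2 ^ j * binormalPDF μ₁ μ₂ σ₁ σ₂ ρ p.1 p.2 := by
  set K := 1 / (2 * π * σ₁ * σ₂ * √(1 - ρ ^ 2))
  have hdom : Integrable fun p : ℝ × ℝ =>
      ‖p.1 ^ i * exp (-(4 * σ₁ ^ 2)⁻¹ * (p.1 - μ₁) ^ 2)‖ *
        (K * ‖p.2 ^ j * exp (-(4 * σ₂ ^ 2)⁻¹ * (p.2 - μ₂) ^ 2)‖) := by
    rw [Measure.volume_eq_prod]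
    exact (integrable_pow_mul_exp_neg_mul_sub_sq (by positivity) μ₁ i).norm.mul_prod
      ((integrable_pow_mul_exp_neg_mul_sub_sq (by positivity) μ₂ j).norm.const_mul K)
  refine hdom.mono' (by unfold binormalPDF; fun_prop) (.of_forall fun p => ?_)
  have hle := binormalPDF_le_mul_exp_mul_exp (μ₁ := μ₁) (μ₂ := μ₂) hσ₁ hσ₂ hρ p.1 p.2
  simp only [norm_mul, norm_pow, Real.norm_eq_abs, abs_exp,
    abs_of_nonneg (binormalPDF_nonneg (μ₁ := μ₁) (μ₂ := μ₂) (ρ := ρ) hσ₁ hσ₂ p.1 p.2)]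
  calc |p.1| ^ i * |p.2| ^ j * binormalPDF μ₁ μ₂ σ₁ σ₂ ρ p.1 p.2
      ≤ |p.1| ^ i * |p.2| ^ j *
          (K * (exp (-(4 * σ₁ ^ 2)⁻¹ * (p.1 - μ₁) ^ 2) * exp (-(4 * σ₂ ^ 2)⁻¹ * (p.2 - μ₂) ^ 2))) := by
        gcongr
    _ = _ := by ring

/-- The marginal density of `U₁` times the density of the conditional law
`N(μ₂ + ρ σ₂ / σ₁ (u₁ - μ₁), σ₂² (1 - ρ²))` of `U₂` given `U₁ = u₁`. -/
theorem binormalPDF_eq_mul_exp (hσ₁ : σ₁ ≠ 0) (hσ₂ : σ₂ ≠ 0) (hρ : ρ ^ 2 ≠ 1) (u₁ u₂ : ℝ) :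
    binormalPDF μ₁ μ₂ σ₁ σ₂ ρ u₁ u₂ =
      1 / (2 * π * σ₁ * σ₂ * √(1 - ρ ^ 2)) * exp (-(u₁ - μ₁) ^ 2 / (2 * σ₁ ^ 2)) *
        exp (-(2 * (σ₂ ^ 2 * (1 - ρ ^ 2)))⁻¹ * (u₂ - (μ₂ + ρ * σ₂ / σ₁ * (u₁ - μ₁))) ^ 2) := by
  have : 1 - ρ ^ 2 ≠ 0 := sub_ne_zero.2 (Ne.symm hρ)
  rw [binormalPDF, mul_assoc _ (exp _), ← exp_add]
  congr 2
  field_simp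
  ring

theorem succ_mul_integral_Ioi_pow_mul_binormalPDF (hσ₁ : 0 < σ₁) (hσ₂ : 0 < σ₂) (hρ : ρ ^ 2 < 1)
    (n : ℕ) (u₁ : ℝ) :
    (n + 1) * (σ₂ ^ 2 * (1 - ρ ^ 2)) * ∫ u₂ in Ioi 0, u₂ ^ n * binormalPDF μ₁ μ₂ σ₁ σ₂ ρ u₁ u₂
      = ∫ u₂ in Ioi 0, (u₂ - (μ₂ + ρ * σ₂ / σ₁ * (u₁ - μ₁))) * u₂ ^ (n + 1) *
          binormalPDF μ₁ μ₂ σ₁ σ₂ ρ u₁ u₂ := by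
  set v := σ₂ ^ 2 * (1 - ρ ^ 2)
  set C := 1 / (2 * π * σ₁ * σ₂ * √(1 - ρ ^ 2)) * exp (-(u₁ - μ₁) ^ 2 / (2 * σ₁ ^ 2))
  have hv : 0 < v := mul_pos (by positivity) (by linarith)
  have hparts := succ_mul_integral_Ioi_pow_mul_exp_neg_mul_sub_sq (inv_pos.2 (mul_pos two_pos hv))
    (μ₂ + ρ * σ₂ / σ₁ * (u₁ - μ₁)) n
  have hfactor (u₂ : ℝ) : binormalPDF μ₁ μ₂ σ₁ σ₂ ρ u₁ u₂
      = C * exp (-(2 * v)⁻¹ * (u₂ - (μ₂ + ρ * σ₂ / σ₁ * (u₁ - μ₁))) ^ 2) :=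
    binormalPDF_eq_mul_exp hσ₁.ne' hσ₂.ne' hρ.ne u₁ u₂
  simp_rw [hfactor, mul_left_comm _ C, integral_const_mul]
  calc (n + 1) * v * (C * ∫ u₂ in Ioi 0, u₂ ^ n *
        exp (-(2 * v)⁻¹ * (u₂ - (μ₂ + ρ * σ₂ / σ₁ * (u₁ - μ₁))) ^ 2))
      = C * (v * ((n + 1) * ∫ u₂ in Ioi 0, u₂ ^ n *
          exp (-(2 * v)⁻¹ * (u₂ - (μ₂ + ρ * σ₂ / σ₁ * (u₁ - μ₁))) ^ 2))) := by ring
    _ = _ := by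
      rw [hparts, ← mul_assoc v, show v * (2 * (2 * v)⁻¹) = 1 by field_simp, one_mul]

end Binormal

theorem prop1_1_second_key_equation (μ₁ μ₂ σ₁ σ₂ ρ : ℝ) (hσ₁ : 0 < σ₁) (hσ₂ : 0 < σ₂)
    (hρ : ρ ∈ Set.Ioo (-1 : ℝ) 1) (σ₁₂ : ℝ) (hσ₁₂ : σ₁₂ = ρ * σ₁ * σ₂)
    (k m : ℕ) (hm : 1 ≤ m) :
    (m : ℝ) * (σ₁ ^ 2 * σ₂ ^ 2 - σ₁₂ ^ 2) *
        ∫ p in Set.Ioi (0 : ℝ) ×ˢ Set.Ioi (0 : ℝ),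
          p.1 ^ k * p.2 ^ (m - 1) * binormalPDF μ₁ μ₂ σ₁ σ₂ ρ p.1 p.2
      = ∫ p in Set.Ioi (0 : ℝ) ×ˢ Set.Ioi (0 : ℝ),
          (σ₁ ^ 2 * (p.1 ^ k * p.2 ^ (m + 1)) - σ₁₂ * (p.1 ^ (k + 1) * p.2 ^ m)
            - (σ₁ ^ 2 * μ₂ - σ₁₂ * μ₁) * (p.1 ^ k * p.2 ^ m))
            * binormalPDF μ₁ μ₂ σ₁ σ₂ ρ p.1 p.2 := by
  obtain ⟨n, rfl⟩ : ∃ n, m = n + 1 := ⟨m - 1, by omega⟩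
  have hρ2 : ρ ^ 2 < 1 := by nlinarith [hρ.1, hρ.2]
  have hmoment (i j : ℕ) : IntegrableOn
      (fun p : ℝ × ℝ => p.1 ^ i * p.2 ^ j * binormalPDF μ₁ μ₂ σ₁ σ₂ ρ p.1 p.2) (Ioi 0 ×ˢ Ioi 0) :=
    (integrable_pow_mul_pow_mul_binormalPDF hσ₁ hσ₂ hρ2 i j).integrableOn
  have hrhs : IntegrableOn (fun p : ℝ × ℝ =>
      (σ₁ ^ 2 * (p.1 ^ k * p.2 ^ (n + 1 + 1)) - σ₁₂ * (p.1 ^ (k + 1) * p.2 ^ (n + 1))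
        - (σ₁ ^ 2 * μ₂ - σ₁₂ * μ₁) * (p.1 ^ k * p.2 ^ (n + 1))) * binormalPDF μ₁ μ₂ σ₁ σ₂ ρ p.1 p.2)
      (Ioi 0 ×ˢ Ioi 0) :=
    ((((hmoment k (n + 2)).const_mul (σ₁ ^ 2)).sub ((hmoment (k + 1) (n + 1)).const_mul σ₁₂)).sub
      ((hmoment k (n + 1)).const_mul (σ₁ ^ 2 * μ₂ - σ₁₂ * μ₁))).congr
      (.of_forall fun p => by simp only [Pi.sub_apply]; ring)
  rw [Nat.add_sub_cancel, Measure.volume_eq_prod, setIntegral_prod _ (hmoment k n),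
    setIntegral_prod _ hrhs, ← integral_const_mul]
  refine setIntegral_congr_fun measurableSet_Ioi fun u₁ _ => ?_
  simp_rw [mul_assoc (u₁ ^ _), integral_const_mul]
  calc _ = σ₁ ^ 2 * u₁ ^ k * ((n + 1) * (σ₂ ^ 2 * (1 - ρ ^ 2)) *
        ∫ u₂ in Ioi 0, u₂ ^ n * binormalPDF μ₁ μ₂ σ₁ σ₂ ρ u₁ u₂) := by rw [hσ₁₂]; push_cast; ring
    _ = _ := by
      rw [succ_mul_integral_Ioi_pow_mul_binormalPDF hσ₁ hσ₂ hρ2, ← integral_const_mul]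
      refine setIntegral_congr_fun measurableSet_Ioi fun u₂ _ => ?_
      rw [hσ₁₂]
      field_simp
      ring
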